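/- Let ε₀, ε₁, …, ε_r ≥ 0 with Σ_{i=0}^{r} ε_i = 1, and let W be the ordered erasure channel with these parameters. Then its symmetric capacity equals I(W) = r − Σ_{i=1}^{r} i·ε_i. -/

import Mathlib

open Finset

/-- The symmetric capacity of a channel with uniform input (with `0 log 0 = 0`). -/
noncomputable def capty {X Y : Type*} [Fintype X] [Fintype Y] (W : X → Y → ℝ) : ℝ :=
  ∑ x, ∑ y, (1 / (Fintype.card X : ℝ)) * W x y *
    Real.logb 2 (W x y / ∑ x', (1 / (Fintype.card X : ℝ)) * W x' y)

/-- The output obtained from the input `x` by erasing its first `i` (lowest-index)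
coordinates. -/
def eraseOut (r : ℕ) (x : Fin r → ZMod 2) (i : ℕ) : Fin r → Option (ZMod 2) :=
  fun j => if (j : ℕ) < i then none else some (x j)

/-- The ordered erasure channel with parameters `ε 0, …, ε r`: the input `x` is mapped to the
output erasing its first `i` coordinates with probability `ε i`, and to no other output. -/
noncomputable def erasureChannel (r : ℕ) (ε : ℕ → ℝ) :
    (Fin r → ZMod 2) → (Fin r → Option (ZMod 2)) → ℝ :=
  fun x y => ∑ i ∈ Finset.range (r + 1), if y = eraseOut r x i then ε i else 0

/-!
An output `y` with `W x y ≠ 0` determines how many coordinates were erased: it is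
`eraseOut r x i` for exactly one `i`, reached from `x` with probability `εᵢ`, and from exactly the
`2 ^ i` inputs agreeing with `x` beyond the first `i` coordinates. Under uniform input its
posterior is therefore uniform on those `2 ^ i` inputs, so the output `eraseOut r x i` carries
`r - i` bits about `x`, and averaging over `i` gives `r - ∑ i εᵢ`.
-/

lemma mul_logb_div_mul_self (b a c : ℝ) : a * Real.logb b (a / (c * a)) = a * Real.logb b c⁻¹ := by
  rcases eq_or_ne a 0 with rfl | ha
  · simp
  · rw [div_mul_cancel_right₀ ha]

section ErasureChannel

variable {r : ℕ}

lemma eq_of_eraseOut_eq {x x' : Fin r → ZMod 2} {i i' : ℕ} (hi : i ≤ r) (hi' : i' ≤ r)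
    (h : eraseOut r x i = eraseOut r x' i') : i = i' := by
  by_contra hne
  rcases Nat.lt_or_gt_of_ne hne with hlt | hlt
  · simpa [eraseOut, hlt] using congrFun h ⟨i, hlt.trans_le hi'⟩
  · simpa [eraseOut, hlt] using congrFun h ⟨i', hlt.trans_le hi⟩

lemma eraseOut_eq_eraseOut_iff {x x' : Fin r → ZMod 2} {i : ℕ} :
    eraseOut r x i = eraseOut r x' i ↔ ∀ j : Fin r, i ≤ j → x j = x' j := by
  simp only [funext_iff, eraseOut]
  refine forall_congr' fun j => ?_
  by_cases hj : (j : ℕ) < i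
  · simp [hj]
  · simp [hj, not_lt.mp hj]

lemma card_eraseOut_eq_eraseOut (x : Fin r → ZMod 2) {i : ℕ} (hi : i ≤ r) :
    #{x' | eraseOut r x i = eraseOut r x' i} = 2 ^ i := by
  have hfiber : ({x' | eraseOut r x i = eraseOut r x' i} : Finset (Fin r → ZMod 2)) =
      Fintype.piFinset fun j : Fin r => if i ≤ (j : ℕ) then {x j} else univ := by
    ext x'
    simp only [mem_filter, mem_univ, true_and, eraseOut_eq_eraseOut_iff, Fintype.mem_piFinset]
    refine forall_congr' fun j => ?_
    split_ifs <;> simp [*, eq_comm]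
  rw [hfiber, Fintype.card_piFinset]
  simp only [apply_ite Finset.card, card_singleton, card_univ, ZMod.card, prod_ite, prod_const_one,
    prod_const, one_mul, not_le, Fin.card_filter_val_lt, min_eq_right hi]

variable (ε : ℕ → ℝ)

lemma erasureChannel_eraseOut (x x' : Fin r → ZMod 2) {i : ℕ} (hi : i ≤ r) :
    erasureChannel r ε x' (eraseOut r x i) =
      if eraseOut r x i = eraseOut r x' i then ε i else 0 := by
  refine sum_eq_single_of_mem i (mem_range.2 (Nat.lt_succ_of_le hi)) fun j hj hji => ?_
  refine if_neg fun h => hji ?_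
  exact (eq_of_eraseOut_eq hi (Nat.le_of_lt_succ (mem_range.1 hj)) h).symm

lemma erasureChannel_eq_zero {x : Fin r → ZMod 2} {y : Fin r → Option (ZMod 2)}
    (hy : y ∉ (range (r + 1)).image (eraseOut r x)) : erasureChannel r ε x y = 0 :=
  sum_eq_zero fun i hi => if_neg fun h => hy (mem_image.2 ⟨i, hi, h.symm⟩)

lemma sum_erasureChannel_eraseOut (x : Fin r → ZMod 2) {i : ℕ} (hi : i ≤ r) :
    ∑ x', erasureChannel r ε x' (eraseOut r x i) = 2 ^ i * ε i := by
  simp only [erasureChannel_eraseOut ε x _ hi, ← sum_filter, sum_const,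
    card_eraseOut_eq_eraseOut x hi, nsmul_eq_mul, Nat.cast_pow, Nat.cast_ofNat]

lemma sum_erasureChannel_mul_logb (x : Fin r → ZMod 2) :
    ∑ y, 1 / (2 : ℝ) ^ r * erasureChannel r ε x y *
        Real.logb 2 (erasureChannel r ε x y / ∑ x', 1 / (2 : ℝ) ^ r * erasureChannel r ε x' y) =
      1 / (2 : ℝ) ^ r * ∑ i ∈ range (r + 1), ε i * (r - i) := by
  simp only [mul_assoc]
  rw [← mul_sum]
  congr 1
  rw [← sum_subset (subset_univ _) fun y _ hy => by rw [erasureChannel_eq_zero ε hy, zero_mul],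
    sum_image fun i hi i' hi' h =>
      eq_of_eraseOut_eq (Nat.le_of_lt_succ (mem_range.1 hi)) (Nat.le_of_lt_succ (mem_range.1 hi')) h]
  refine sum_congr rfl fun i hi_mem => ?_
  have hi : i ≤ r := Nat.le_of_lt_succ (mem_range.1 hi_mem)
  have hposterior : ∑ x', 1 / (2 : ℝ) ^ r * erasureChannel r ε x' (eraseOut r x i) =
      2 ^ i / 2 ^ r * ε i := by
    rw [← mul_sum, sum_erasureChannel_eraseOut ε x hi]
    ring
  rw [hposterior, erasureChannel_eraseOut ε x x hi, if_pos rfl, mul_logb_div_mul_self, inv_div,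
    Real.logb_div (by positivity) (by positivity), Real.logb_pow, Real.logb_pow,
    Real.logb_self_eq_one one_lt_two, mul_one, mul_one]

end ErasureChannel

lemma sum_mul_sub_eq_sub_sum_mul {ε : ℕ → ℝ} (r : ℕ) (hsum : ∑ i ∈ range (r + 1), ε i = 1) :
    ∑ i ∈ range (r + 1), ε i * (r - i) = r - ∑ i ∈ Icc 1 r, (i : ℝ) * ε i := by
  have hIcc : ∑ i ∈ Icc 1 r, (i : ℝ) * ε i = ∑ i ∈ range (r + 1), (i : ℝ) * ε i := by
    refine sum_subset (fun i hi => ?_) fun i _ hi => ?_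
    · simp only [mem_Icc, mem_range] at hi ⊢
      omega
    · have : i = 0 := by simp only [mem_Icc, mem_range] at *; omega
      simp [this]
  rw [hIcc, eq_sub_iff_add_eq, ← sum_add_distrib]
  calc ∑ i ∈ range (r + 1), (ε i * (r - i) + i * ε i) = ∑ i ∈ range (r + 1), ε i * r :=
        sum_congr rfl fun _ _ => by ring
    _ = r := by rw [← sum_mul, hsum, one_mul]

theorem erasure_channel_capacity_general (r : ℕ) (ε : ℕ → ℝ)
    (hsum : ∑ i ∈ Finset.range (r + 1), ε i = 1) :
    capty (erasureChannel r ε) = (r : ℝ) - ∑ i ∈ Finset.Icc 1 r, (i : ℝ) * ε i := by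
  have hcard : (Fintype.card (Fin r → ZMod 2) : ℝ) = 2 ^ r := by simp
  unfold capty
  simp only [hcard, sum_erasureChannel_mul_logb, sum_const, card_univ, nsmul_eq_mul]
  rw [← mul_assoc, mul_one_div_cancel (by positivity), one_mul, sum_mul_sub_eq_sub_sum_mul r hsum]

/-- the symmetric capacity of the ordered erasure channel equals
`r - ∑_{i=1}^r i εᵢ`. -/
theorem erasure_channel_capacity (r : ℕ) (hr : 1 ≤ r) (ε : ℕ → ℝ)
    (hε : ∀ i ≤ r, 0 ≤ ε i) (hsum : ∑ i ∈ Finset.range (r + 1), ε i = 1) :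
    capty (erasureChannel r ε) = (r : ℝ) - ∑ i ∈ Finset.Icc 1 r, (i : ℝ) * ε i :=
  erasure_channel_capacity_general r ε hsum
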